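/- arXiv:1905.10802 — 2 statements merged into one kernel-verified Lean document; each statement's English description precedes it below -/
import Mathlib

section
/- Möbius matrix-vector multiplication is associative: for matrices M ∈ R^{m×k}, N ∈ R^{k×n} and p in the open unit ball B^n with Np ≠ 0 and MNp ≠ 0, (MN) ⊗ p = M ⊗ (N ⊗ p). -/
open Real
open scoped RealInnerProductSpace Classical
noncomputable section

/-- Inverse hyperbolic cosine. -/
noncomputable def arcosh (x : ℝ) : ℝ := Real.log (x + Real.sqrt (x ^ 2 - 1))

/-- Inverse hyperbolic tangent. -/
noncomputable def artanh (x : ℝ) : ℝ := Real.log ((1 + x) / (1 - x)) / 2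

/-- Möbius addition on the Poincaré ball. -/
noncomputable def mobiusAdd {n : ℕ} (u v : EuclideanSpace ℝ (Fin n)) :
    EuclideanSpace ℝ (Fin n) :=
  (1 / (1 + 2 * ⟪u, v⟫ + ‖u‖ ^ 2 * ‖v‖ ^ 2)) •
    ((1 + 2 * ⟪u, v⟫ + ‖v‖ ^ 2) • u + (1 - ‖u‖ ^ 2) • v)

/-- Möbius scalar multiplication on the Poincaré ball. -/
noncomputable def mobiusSmul {n : ℕ} (k : ℝ) (p : EuclideanSpace ℝ (Fin n)) :
    EuclideanSpace ℝ (Fin n) :=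
  if p = 0 then 0 else (Real.tanh (k * _root_.artanh ‖p‖) / ‖p‖) • p

/-- Exponential map at the origin of the Poincaré ball. -/
noncomputable def expZero {n : ℕ} (w : EuclideanSpace ℝ (Fin n)) :
    EuclideanSpace ℝ (Fin n) :=
  if w = 0 then 0 else (Real.tanh ‖w‖ / ‖w‖) • w

/-- Logarithmic map at the origin of the Poincaré ball. -/
noncomputable def logZero {n : ℕ} (u : EuclideanSpace ℝ (Fin n)) :
    EuclideanSpace ℝ (Fin n) :=
  if u = 0 then 0 else (_root_.artanh ‖u‖ / ‖u‖) • u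

/-- View a plain vector as a point of Euclidean space. -/
def toE {m : ℕ} (x : Fin m → ℝ) : EuclideanSpace ℝ (Fin m) :=
  (WithLp.equiv 2 (Fin m → ℝ)).symm x

/-- View a point of Euclidean space as a plain vector. -/
def fromE {m : ℕ} (x : EuclideanSpace ℝ (Fin m)) : Fin m → ℝ :=
  WithLp.equiv 2 (Fin m → ℝ) x

/-- Möbius matrix-vector multiplication. -/
noncomputable def mobiusMat {m n : ℕ} (M : Matrix (Fin m) (Fin n) ℝ)
    (p : EuclideanSpace ℝ (Fin n)) : EuclideanSpace ℝ (Fin m) :=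
  if toE (M.mulVec (fromE p)) = 0 then 0
  else (Real.tanh ((‖toE (M.mulVec (fromE p))‖ / ‖p‖) * _root_.artanh ‖p‖) /
      ‖toE (M.mulVec (fromE p))‖) • toE (M.mulVec (fromE p))

/-- Poincaré distance on the open unit ball. -/
noncomputable def poincareDist {n : ℕ} (u v : EuclideanSpace ℝ (Fin n)) : ℝ :=
  2 * _root_.artanh ‖mobiusAdd (-u) v‖

/-!
Both sides are computed through the origin chart: `M ⊗ p = exp₀ (M (log₀ p))`, because `log₀`
only rescales `p` by the nonnegative factor `artanh ‖p‖ / ‖p‖`, which commutes with `M`.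
Since `log₀ ∘ exp₀ = id`, this gives
`M ⊗ (N ⊗ p) = exp₀ (M (log₀ (exp₀ (N (log₀ p))))) = exp₀ ((M N) (log₀ p)) = (M N) ⊗ p`.
-/

theorem Real.tanh_pos {x : ℝ} (hx : 0 < x) : 0 < tanh x := by
  rw [tanh_eq_sinh_div_cosh]
  exact div_pos (sinh_pos_iff.mpr hx) (cosh_pos x)

theorem Real.tanh_nonneg {x : ℝ} (hx : 0 ≤ x) : 0 ≤ tanh x := by
  rcases hx.eq_or_lt with rfl | hx
  · rw [tanh_zero]
  · exact (tanh_pos hx).le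

theorem artanh_eq_real_artanh {x : ℝ} (hx : x ∈ Set.Icc (-1) 1) :
    _root_.artanh x = Real.artanh x := by
  rw [Real.artanh_eq_half_log hx, _root_.artanh]
  ring

theorem artanh_tanh (x : ℝ) : _root_.artanh (tanh x) = x := by
  rw [artanh_eq_real_artanh ⟨(neg_one_lt_tanh x).le, (tanh_lt_one x).le⟩, Real.artanh_tanh]

theorem toE_mulVec_fromE {m n : ℕ} (M : Matrix (Fin m) (Fin n) ℝ) (x : EuclideanSpace ℝ (Fin n)) :
    toE (M.mulVec (fromE x)) = M.toEuclideanLin x :=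
  rfl

section OriginChart

variable {n : ℕ}

theorem expZero_eq_smul (w : EuclideanSpace ℝ (Fin n)) :
    expZero w = (tanh ‖w‖ / ‖w‖) • w := by
  by_cases hw : w = 0 <;> simp [expZero, hw]

theorem logZero_eq_smul (u : EuclideanSpace ℝ (Fin n)) :
    logZero u = (_root_.artanh ‖u‖ / ‖u‖) • u := by
  by_cases hu : u = 0 <;> simp [logZero, hu]

theorem norm_expZero (w : EuclideanSpace ℝ (Fin n)) : ‖expZero w‖ = tanh ‖w‖ := by
  rcases eq_or_ne w 0 with rfl | hw
  · simp [expZero]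
  · rw [expZero_eq_smul, norm_smul, Real.norm_of_nonneg (div_nonneg
      (tanh_nonneg (norm_nonneg w)) (norm_nonneg w)), div_mul_cancel₀ _ (norm_ne_zero_iff.mpr hw)]

theorem logZero_expZero (w : EuclideanSpace ℝ (Fin n)) : logZero (expZero w) = w := by
  rcases eq_or_ne w 0 with rfl | hw
  · simp [expZero, logZero]
  have hw' : 0 < ‖w‖ := norm_pos_iff.mpr hw
  have htanh : 0 < tanh ‖w‖ := tanh_pos hw'
  rw [logZero_eq_smul, norm_expZero, _root_.artanh_tanh, expZero_eq_smul, smul_smul,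
    div_mul_div_cancel₀ htanh.ne', div_self hw'.ne', one_smul]

theorem expZero_smul_of_nonneg {a : ℝ} (ha : 0 ≤ a) (w : EuclideanSpace ℝ (Fin n)) :
    expZero (a • w) = (tanh (a * ‖w‖) / ‖w‖) • w := by
  rw [expZero_eq_smul, norm_smul, Real.norm_of_nonneg ha, smul_smul]
  rcases ha.eq_or_lt with rfl | ha
  · simp
  · congr 1
    field_simp

end OriginChart

theorem mobiusMat_eq_smul {m n : ℕ} (M : Matrix (Fin m) (Fin n) ℝ) (p : EuclideanSpace ℝ (Fin n)) :
    mobiusMat M p = (tanh (‖M.toEuclideanLin p‖ / ‖p‖ * _root_.artanh ‖p‖) /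
      ‖M.toEuclideanLin p‖) • M.toEuclideanLin p := by
  rw [mobiusMat, toE_mulVec_fromE]
  split_ifs with hMp <;> simp [hMp]

theorem mobiusMat_eq_expZero_logZero {m n : ℕ} (M : Matrix (Fin m) (Fin n) ℝ)
    {p : EuclideanSpace ℝ (Fin n)} (hp : ‖p‖ ≤ 1) :
    mobiusMat M p = expZero (M.toEuclideanLin (logZero p)) := by
  have hartanh : 0 ≤ _root_.artanh ‖p‖ := by
    rw [artanh_eq_real_artanh ⟨by linarith [norm_nonneg p], hp⟩]
    exact Real.artanh_nonneg (norm_nonneg p)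
  rw [logZero_eq_smul, map_smul, expZero_smul_of_nonneg (div_nonneg hartanh (norm_nonneg p)),
    mobiusMat_eq_smul, div_mul_comm]

theorem mobiusMat_assoc_general {m k n : ℕ} (M : Matrix (Fin m) (Fin k) ℝ)
    (N : Matrix (Fin k) (Fin n) ℝ) (p : EuclideanSpace ℝ (Fin n))
    (hp : ‖p‖ < 1) :
    mobiusMat (M * N) p = mobiusMat M (mobiusMat N p) := by
  have hNp : ‖mobiusMat N p‖ ≤ 1 := by
    rw [mobiusMat_eq_expZero_logZero N hp.le, norm_expZero]
    exact (tanh_lt_one _).le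
  rw [mobiusMat_eq_expZero_logZero M hNp, mobiusMat_eq_expZero_logZero N hp.le, logZero_expZero,
    mobiusMat_eq_expZero_logZero _ hp.le, Matrix.toLpLin_mul (q := 2), LinearMap.comp_apply]

theorem mobiusMat_assoc {m k n : ℕ} (M : Matrix (Fin m) (Fin k) ℝ)
    (N : Matrix (Fin k) (Fin n) ℝ) (p : EuclideanSpace ℝ (Fin n))
    (hp : ‖p‖ < 1)
    (hN : toE (N.mulVec (fromE p)) ≠ 0)
    (hMN : toE ((M * N).mulVec (fromE p)) ≠ 0) :
    mobiusMat (M * N) p = mobiusMat M (mobiusMat N p) :=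
  mobiusMat_assoc_general M N p hp
end
end

section
/- Möbius scalar multiplication is distributive over addition of scalars in the gyrovector sense: for all j, k ∈ R and p in the open unit ball, (j + k) ⊗ p = (j ⊗ p) ⊕ (k ⊗ p). -/
open Real
open scoped RealInnerProductSpace Classical
noncomputable section

/-! For `p ≠ 0`, both `j ⊗ p` and `k ⊗ p` lie on the line spanned by the unit vector `p / ‖p‖`,
with coordinates `tanh (j a)` and `tanh (k a)`, where `a = artanh ‖p‖`. On such a line Möbius
addition acts on coordinates as `(s, t) ↦ (s + t) / (1 + s t)`, which is the addition formula
for `tanh`; hence the coordinates combine to `tanh ((j + k) a)`. -/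

lemma Real.one_add_tanh_mul_tanh_pos (x y : ℝ) : 0 < 1 + Real.tanh x * Real.tanh y := by
  nlinarith [mul_pos (sub_pos.2 (Real.tanh_lt_one x)) (sub_pos.2 (Real.tanh_lt_one y)),
    mul_pos (neg_lt_iff_pos_add'.1 (Real.neg_one_lt_tanh x))
      (neg_lt_iff_pos_add'.1 (Real.neg_one_lt_tanh y))]

lemma Real.tanh_add (x y : ℝ) :
    Real.tanh (x + y) = (Real.tanh x + Real.tanh y) / (1 + Real.tanh x * Real.tanh y) := by
  have hx := (Real.cosh_pos x).ne'
  have hy := (Real.cosh_pos y).ne'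
  have hxy := (Real.one_add_tanh_mul_tanh_pos x y).ne'
  simp only [Real.tanh_eq_sinh_div_cosh] at hxy ⊢
  rw [Real.sinh_add, Real.cosh_add]
  field_simp

lemma mobiusAdd_smul_smul_of_norm_eq_one {n : ℕ} {e : EuclideanSpace ℝ (Fin n)}
    (he : ‖e‖ = 1) {a b : ℝ} (hab : 1 + a * b ≠ 0) :
    mobiusAdd (a • e) (b • e) = ((a + b) / (1 + a * b)) • e := by
  have hinner : ⟪a • e, b • e⟫ = a * b := by
    rw [real_inner_smul_left, real_inner_smul_right, real_inner_self_eq_norm_sq, he]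
    ring
  have hnorm (c : ℝ) : ‖c • e‖ ^ 2 = c ^ 2 := by
    rw [norm_smul, he, mul_one, Real.norm_eq_abs, sq_abs]
  rw [mobiusAdd, hinner, hnorm, hnorm, smul_smul, smul_smul, ← add_smul, smul_smul]
  congr 1
  rw [show 1 + 2 * (a * b) + a ^ 2 * b ^ 2 = (1 + a * b) ^ 2 by ring]
  field_simp
  ring

lemma mobiusSmul_eq_tanh_smul {n : ℕ} (k : ℝ) {p : EuclideanSpace ℝ (Fin n)} (hp : p ≠ 0) :
    mobiusSmul k p = Real.tanh (k * _root_.artanh ‖p‖) • (‖p‖⁻¹ • p) := by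
  rw [mobiusSmul, if_neg hp, smul_smul, div_eq_mul_inv]

theorem mobiusSmul_add_distrib_general {n : ℕ} (j k : ℝ) (p : EuclideanSpace ℝ (Fin n)) :
    mobiusSmul (j + k) p = mobiusAdd (mobiusSmul j p) (mobiusSmul k p) := by
  by_cases hp : p = 0
  · simp [hp, mobiusSmul, mobiusAdd]
  have he : ‖‖p‖⁻¹ • p‖ = 1 := norm_smul_inv_norm hp
  simp only [mobiusSmul_eq_tanh_smul _ hp]
  rw [mobiusAdd_smul_smul_of_norm_eq_one he (Real.one_add_tanh_mul_tanh_pos _ _).ne', add_mul,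
    Real.tanh_add]

theorem mobiusSmul_add_distrib {n : ℕ} (j k : ℝ) (p : EuclideanSpace ℝ (Fin n))
    (hp : ‖p‖ < 1) :
    mobiusSmul (j + k) p = mobiusAdd (mobiusSmul j p) (mobiusSmul k p) :=
  mobiusSmul_add_distrib_general j k p
end
end
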